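/- arXiv:2402.07073 — 6 statements merged into one kernel-verified Lean document; each statement's English description precedes it below -/
import Mathlib

section
/- Let f be a C⁴ quaternion-valued function on an open subset of ℝ⁴. Then □(Z⁺·f) = 2∇f + Z⁺·□f, where Z = z⁰e₀+z¹e₁+z²e₂+z³e₃ and Z⁺ = z⁰e₀−z¹e₁−z²e₂−z³e₃ is quaternionic conjugation, and the products are quaternionic multiplication. -/
noncomputable section

/-- The real quaternions. -/
abbrev Hq := Quaternion ℝ

/-- The quaternionic units `e₀ = 1, e₁, e₂, e₃`. -/
def qe : Fin 4 → Hq := ![1, ⟨0,1,0,0⟩, ⟨0,0,1,0⟩, ⟨0,0,0,1⟩]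

/-- Partial derivative `∂/∂zⁱ` of a quaternion-valued function on ℝ⁴. -/
def pdq (i : Fin 4) (f : (Fin 4 → ℝ) → Hq) : (Fin 4 → ℝ) → Hq :=
  fun x => fderiv ℝ f x (Pi.single i 1)

/-- `∇ = e₀∂₀ − e₁∂₁ − e₂∂₂ − e₃∂₃`. -/
def DMinus (f : (Fin 4 → ℝ) → Hq) : (Fin 4 → ℝ) → Hq :=
  fun x => pdq 0 f x - qe 1 * pdq 1 f x - qe 2 * pdq 2 f x - qe 3 * pdq 3 f x

/-- The four-dimensional Laplacian `□ = ∑ᵢ ∂ᵢ²`. -/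
def lapq (f : (Fin 4 → ℝ) → Hq) : (Fin 4 → ℝ) → Hq :=
  fun x => ∑ i : Fin 4, pdq i (pdq i f) x

/-- The quaternion `Z = z⁰e₀ + z¹e₁ + z²e₂ + z³e₃` attached to a point of ℝ⁴;
its quaternionic conjugate `Z⁺` is `star (Zq x)`. -/
def Zq (x : Fin 4 → ℝ) : Hq := ∑ i : Fin 4, x i • qe i

/-! Since `y ↦ Z⁺(y)` is ℝ-linear with `∂ᵢ Z⁺ = ēᵢ`, the Leibniz rule applied twice gives
`∂ᵢ²(Z⁺ f) = 2 ēᵢ ∂ᵢ f + Z⁺ ∂ᵢ² f` (the second derivative of `Z⁺` vanishes). Summing over `i`,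
`∑ ēᵢ ∂ᵢ f = ∇f` because `ē₀ = e₀` and `ēᵢ = -eᵢ` for the imaginary units. -/

open Finset Filter Topology

section ProductRule

variable {E A : Type*} [NormedAddCommGroup E] [NormedSpace ℝ E] [NormedRing A] [NormedAlgebra ℝ A]

theorem fderiv_clm_mul_apply (L : E →L[ℝ] A) {f : E → A} {x : E}
    (hf : DifferentiableAt ℝ f x) (v : E) :
    fderiv ℝ (fun y => L y * f y) x v = L v * f x + L x * fderiv ℝ f x v := by
  have h : HasFDerivAt (fun y => L y * f y) _ x := L.hasFDerivAt.mul' hf.hasFDerivAt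
  rw [h.fderiv]
  simp [add_comm]

theorem fderiv_fderiv_clm_mul_apply (L : E →L[ℝ] A) {f : E → A} {x : E}
    (hf : ContDiffAt ℝ 2 f x) (v : E) :
    fderiv ℝ (fun y => fderiv ℝ (fun z => L z * f z) y v) x v
      = 2 * (L v * fderiv ℝ f x v) + L x * fderiv ℝ (fun y => fderiv ℝ f y v) x v := by
  have hfderiv : (fun y => fderiv ℝ (fun z => L z * f z) y v)
      =ᶠ[𝓝 x] fun y => L v * f y + L y * fderiv ℝ f y v :=
    (hf.eventually (by simp)).mono fun y hy =>
      fderiv_clm_mul_apply L (hy.differentiableAt (by simp)) v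
  have hdf : DifferentiableAt ℝ (fun y => fderiv ℝ f y v) x :=
    ((hf.fderiv_right (m := 1) (by norm_num)).clm_apply contDiffAt_const).differentiableAt
      (by simp)
  have h : HasFDerivAt (fun y => L v * f y + L y * fderiv ℝ f y v) _ x :=
    ((hf.differentiableAt (by simp)).hasFDerivAt.const_mul (L v)).add
      (L.hasFDerivAt.mul' hdf.hasFDerivAt)
  rw [hfderiv.fderiv_eq, h.fderiv]
  simp only [add_apply, smul_apply, smul_eq_mul,
    MulOpposite.smul_eq_mul_unop, MulOpposite.unop_op]
  noncomm_ring

end ProductRule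

def conjZ : (Fin 4 → ℝ) →L[ℝ] Hq :=
  ∑ i, (ContinuousLinearMap.proj i).smulRight (star (qe i))

theorem conjZ_apply (y : Fin 4 → ℝ) : conjZ y = star (Zq y) := by
  simp [conjZ, Zq, star_sum]

theorem conjZ_single (i : Fin 4) : conjZ (Pi.single i 1) = star (qe i) := by
  simp [conjZ, Pi.single_apply]

theorem sum_star_qe_mul (a : Fin 4 → Hq) :
    ∑ i, star (qe i) * a i = a 0 - qe 1 * a 1 - qe 2 * a 2 - qe 3 * a 3 := by
  have h : ∀ i : Fin 4, i ≠ 0 → star (qe i) = -qe i := fun i hi => by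
    fin_cases i <;> first | contradiction | exact Quaternion.star_eq_neg.2 rfl
  rw [Fin.sum_univ_four, h 1 (by decide), h 2 (by decide), h 3 (by decide),
    show qe 0 = 1 from rfl, star_one, one_mul]
  simp only [neg_mul, sub_eq_add_neg]

/-- for a C⁴ quaternion-valued function `f` on an open subset `U` of ℝ⁴,
`□(Z⁺·f) = 2∇f + Z⁺·□f` on `U`. -/
theorem laplacian_conj_mul (U : Set (Fin 4 → ℝ)) (hU : IsOpen U)
    (f : (Fin 4 → ℝ) → Hq) (hf : ContDiffOn ℝ 4 f U) :
    ∀ x ∈ U, lapq (fun y => star (Zq y) * f y) x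
      = 2 * DMinus f x + star (Zq x) * lapq f x := by
  intro x hx
  have hf2 : ContDiffAt ℝ 2 f x := (hf.contDiffAt (hU.mem_nhds hx)).of_le (by norm_num)
  have hterm (i : Fin 4) : pdq i (pdq i fun y => star (Zq y) * f y) x
      = 2 * (star (qe i) * pdq i f x) + star (Zq x) * pdq i (pdq i f) x := by
    unfold pdq
    simpa only [← conjZ_apply, conjZ_single] using
      fderiv_fderiv_clm_mul_apply conjZ hf2 (Pi.single i 1)
  calc lapq (fun y => star (Zq y) * f y) x
      = ∑ i, (2 * (star (qe i) * pdq i f x) + star (Zq x) * pdq i (pdq i f) x) :=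
        sum_congr rfl fun i _ => hterm i
    _ = 2 * ∑ i, star (qe i) * pdq i f x + star (Zq x) * lapq f x := by
        simp only [sum_add_distrib, mul_sum, lapq]
    _ = 2 * DMinus f x + star (Zq x) * lapq f x := by
        rw [sum_star_qe_mul]; rfl
end
end

section
/- For every nonnegative integer n, the quaternion-valued function X ↦ (X⁺)ⁿ on ℍ satisfies ∇□ (X⁺)ⁿ = 0 and (□ (X⁺)ⁿ)⃐∇ = 0; that is, each matrix entry of (X⁺)ⁿ is quasi anti regular from both sides. -/
noncomputable section

/-- `∇` applied from the right: `g ∇ = ∂₀g − (∂₁g)e₁ − (∂₂g)e₂ − (∂₃g)e₃`. -/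
def DMinusR (f : (Fin 4 → ℝ) → Hq) : (Fin 4 → ℝ) → Hq :=
  fun x => pdq 0 f x - pdq 1 f x * qe 1 - pdq 2 f x * qe 2 - pdq 3 f x * qe 3

/-!
Write `X = Zq x` and `W = X⁺ = star (Zq x)`. They commute, `∂ᵢX = eᵢ` and `∂ᵢW = ēᵢ`, so every
computation reduces to the sandwich identities `∑ᵢ ēᵢ a ēᵢ = -2a⁺` and
`∑ᵢ ēᵢ a eᵢ = ∑ᵢ eᵢ a ēᵢ = 2(a + a⁺)`.

Since `W` has constant partial derivatives, `□(F W) = (□F) W + 2 F∇`, and `Wⁿ∇ = -2 ∑ₖ XᵏW^(n-1-k)`;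
by induction `□Wⁿ = -4 ∑_q (n-1-q) X^q W^(n-2-q)`. On a monomial `XᵇWᶜ` the operators `∇` and `⃐∇`
act by the same formula `2 (b M_(b-1) + ∑_(k<b) M_k - ∑_(k<c) M_k)` with `M_k = XᵏW^(b+c-1-k)`, and
in the combination with weights `n-1-q` the coefficient of every `M_k` cancels.
-/

open Finset

section Calculus

variable {f g : (Fin 4 → ℝ) → Hq} {x : Fin 4 → ℝ} {i : Fin 4}

theorem pdq_add (hf : DifferentiableAt ℝ f x) (hg : DifferentiableAt ℝ g x) :
    pdq i (fun y => f y + g y) x = pdq i f x + pdq i g x := by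
  simp [pdq, fderiv_fun_add hf hg]

theorem pdq_sum {ι : Type*} (s : Finset ι) {F : ι → (Fin 4 → ℝ) → Hq}
    (hF : ∀ k ∈ s, DifferentiableAt ℝ (F k) x) :
    pdq i (fun y => ∑ k ∈ s, F k y) x = ∑ k ∈ s, pdq i (F k) x := by
  simp [pdq, fderiv_fun_sum hF]

theorem pdq_smul {R : Type*} [Semiring R] [Module R Hq] [SMulCommClass ℝ R Hq]
    [ContinuousConstSMul R Hq] (c : R) (hf : DifferentiableAt ℝ f x) :
    pdq i (fun y => c • f y) x = c • pdq i f x := by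
  simp [pdq, fderiv_fun_const_smul hf]

theorem pdq_mul (hf : DifferentiableAt ℝ f x) (hg : DifferentiableAt ℝ g x) :
    pdq i (fun y => f y * g y) x = pdq i f x * g x + f x * pdq i g x := by
  simp [pdq, fderiv_fun_mul' hf hg, add_comm]

theorem pdq_const (c : Hq) : pdq i (fun _ => c) x = 0 := by
  simp [pdq]

theorem pdq_pow (hf : DifferentiableAt ℝ f x) (n : ℕ) :
    pdq i (fun y => f y ^ n) x = ∑ k ∈ range n, f x ^ (n - 1 - k) * pdq i f x * f x ^ k := by
  simp [pdq, fderiv_fun_pow' n hf]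

theorem ContDiff.differentiable_pdq (hf : ContDiff ℝ 2 f) : Differentiable ℝ (pdq i f) :=
  ((hf.fderiv_right (m := 1) (by norm_num)).clm_apply contDiff_const).differentiable
    one_ne_zero

end Calculus

def coordComb (c : Fin 4 → Hq) : (Fin 4 → ℝ) →L[ℝ] Hq :=
  ∑ i, (ContinuousLinearMap.proj i).smulRight (c i)

theorem coordComb_apply (c : Fin 4 → Hq) (y : Fin 4 → ℝ) :
    coordComb c y = ∑ i, y i • c i := by
  simp [coordComb]

theorem pdq_coordComb (c : Fin 4 → Hq) (i : Fin 4) (x : Fin 4 → ℝ) :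
    pdq i (coordComb c) x = c i := by
  simp [pdq, coordComb_apply, Pi.single_apply]

theorem Zq_eq_coordComb : Zq = coordComb qe :=
  funext fun y => (coordComb_apply qe y).symm

theorem star_Zq_eq_coordComb : (fun y => star (Zq y)) = coordComb (fun i => star (qe i)) :=
  funext fun y => by simp [coordComb_apply, Zq, star_sum, Quaternion.star_smul]

@[fun_prop]
theorem contDiff_Zq {n : WithTop ℕ∞} : ContDiff ℝ n Zq :=
  Zq_eq_coordComb ▸ (coordComb qe).contDiff

@[fun_prop]
theorem contDiff_star_Zq {n : WithTop ℕ∞} : ContDiff ℝ n (fun y => star (Zq y)) :=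
  star_Zq_eq_coordComb ▸ (coordComb _).contDiff

@[fun_prop]
theorem differentiable_Zq : Differentiable ℝ Zq := contDiff_Zq.differentiable one_ne_zero

@[fun_prop]
theorem differentiable_star_Zq : Differentiable ℝ (fun y => star (Zq y)) :=
  contDiff_star_Zq.differentiable one_ne_zero

theorem pdq_Zq (i : Fin 4) (x : Fin 4 → ℝ) : pdq i Zq x = qe i := by
  rw [Zq_eq_coordComb, pdq_coordComb]

theorem pdq_star_Zq (i : Fin 4) (x : Fin 4 → ℝ) :
    pdq i (fun y => star (Zq y)) x = star (qe i) := by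
  rw [star_Zq_eq_coordComb, pdq_coordComb]

section Sandwich

theorem qe_re (i : Fin 4) : (qe i).re = if i = 0 then 1 else 0 := by fin_cases i <;> rfl
theorem qe_imI (i : Fin 4) : (qe i).imI = if i = 1 then 1 else 0 := by fin_cases i <;> rfl
theorem qe_imJ (i : Fin 4) : (qe i).imJ = if i = 2 then 1 else 0 := by fin_cases i <;> rfl
theorem qe_imK (i : Fin 4) : (qe i).imK = if i = 3 then 1 else 0 := by fin_cases i <;> rfl

attribute [local simp] Fin.sum_univ_four qe_re qe_imI qe_imJ qe_imK

theorem sum_star_qe_mul_star_qe (a : Hq) :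
    ∑ i, star (qe i) * a * star (qe i) = -(2 • star a) := by
  rw [two_nsmul]; ext <;> simp

theorem sum_star_qe_mul_qe (a : Hq) : ∑ i, star (qe i) * a * qe i = 2 • (a + star a) := by
  rw [two_nsmul]; ext <;> simp
  ring

theorem sum_qe_mul_star_qe (a : Hq) : ∑ i, qe i * a * star (qe i) = 2 • (a + star a) := by
  rw [two_nsmul]; ext <;> simp
  ring

theorem star_qe_of_ne_zero {i : Fin 4} (hi : i ≠ 0) : star (qe i) = -qe i := by
  ext <;> simp [hi]

end Sandwich

theorem star_qe_zero : star (qe 0) = 1 :=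
  star_one Hq

theorem DMinus_eq_sum (f : (Fin 4 → ℝ) → Hq) (x : Fin 4 → ℝ) :
    DMinus f x = ∑ i, star (qe i) * pdq i f x := by
  simp (disch := decide) only [DMinus, Fin.sum_univ_four, star_qe_zero, star_qe_of_ne_zero,
    one_mul, neg_mul, sub_eq_add_neg]

theorem DMinusR_eq_sum (f : (Fin 4 → ℝ) → Hq) (x : Fin 4 → ℝ) :
    DMinusR f x = ∑ i, pdq i f x * star (qe i) := by
  simp (disch := decide) only [DMinusR, Fin.sum_univ_four, star_qe_zero, star_qe_of_ne_zero,
    mul_one, mul_neg, sub_eq_add_neg]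

section Linearity

variable {ι : Type*} (s : Finset ι) (c : ι → ℤ) {g : ι → (Fin 4 → ℝ) → Hq}
  {x : Fin 4 → ℝ}

theorem pdq_sum_zsmul (i : Fin 4) (hg : ∀ k ∈ s, DifferentiableAt ℝ (g k) x) :
    pdq i (fun y => ∑ k ∈ s, c k • g k y) x = ∑ k ∈ s, c k • pdq i (g k) x := by
  rw [pdq_sum (F := fun k y => c k • g k y) s fun k hk => (hg k hk).const_smul (c k)]
  exact sum_congr rfl fun k hk => pdq_smul (c k) (hg k hk)

theorem DMinus_sum_zsmul (hg : ∀ k ∈ s, DifferentiableAt ℝ (g k) x) :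
    DMinus (fun y => ∑ k ∈ s, c k • g k y) x = ∑ k ∈ s, c k • DMinus (g k) x := by
  simp only [DMinus_eq_sum, pdq_sum_zsmul s c _ hg, mul_sum, mul_smul_comm, smul_sum]
  exact sum_comm

theorem DMinusR_sum_zsmul (hg : ∀ k ∈ s, DifferentiableAt ℝ (g k) x) :
    DMinusR (fun y => ∑ k ∈ s, c k • g k y) x = ∑ k ∈ s, c k • DMinusR (g k) x := by
  simp only [DMinusR_eq_sum, pdq_sum_zsmul s c _ hg, sum_mul, smul_mul_assoc, smul_sum]
  exact sum_comm

end Linearity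

section Combinatorics

variable {G : Type*} [AddCommGroup G]

/-- `2 • monoNabla V b c` is the common value of `∇(XᵇWᶜ)` and `(XᵇWᶜ)∇` when
`V k = XᵏW^(b+c-1-k)`. The truncated `b - 1` is harmless: at `b = 0` its coefficient is `0`. -/
def monoNabla (V : ℕ → G) (b c : ℕ) : G :=
  b • V (b - 1) + ∑ k ∈ range b, V k - ∑ k ∈ range c, V k

theorem sum_range_succ_nsmul_pred_add_sum_range (V : ℕ → G) (N : ℕ) :
    ∑ b ∈ range (N + 1), (b • V (b - 1) + ∑ k ∈ range b, V k)
      = (N + 1) • ∑ k ∈ range N, V k := by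
  induction N with
  | zero => simp
  | succ N ih =>
    rw [sum_range_succ, ih, sum_range_succ _ N, Nat.add_sub_cancel]
    module

theorem sum_range_succ_tsub_nsmul (f : ℕ → G) (N : ℕ) :
    ∑ b ∈ range (N + 1), (N + 1 - b) • f b
      = ∑ b ∈ range N, (N - b) • f b + ∑ b ∈ range (N + 1), f b := by
  have hlast : ∑ b ∈ range (N + 1), (N - b) • f b = ∑ b ∈ range N, (N - b) • f b := by
    simp [sum_range_succ]
  rw [← hlast, ← sum_add_distrib]
  exact sum_congr rfl fun b hb => by
    rw [← succ_nsmul, show N + 1 - b = N - b + 1 by have := mem_range.mp hb; omega]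

theorem sum_range_tsub_nsmul_monoNabla_eq_zero (V : ℕ → G) (N : ℕ) :
    ∑ b ∈ range N, (N - b) • monoNabla V b (N - 1 - b) = 0 := by
  have reflect : ∑ b ∈ range N, (N - b) • ∑ k ∈ range (N - 1 - b), V k
      = ∑ b ∈ range N, (b + 1) • ∑ k ∈ range b, V k := by
    rw [← sum_range_reflect]
    exact sum_congr rfl fun b hb => by
      have := mem_range.mp hb
      rw [show N - (N - 1 - b) = b + 1 by omega, show N - 1 - (N - 1 - b) = b by omega]
  have weighted : ∀ M, ∑ b ∈ range M, (M - b) • (b • V (b - 1) + ∑ k ∈ range b, V k)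
      = ∑ b ∈ range M, (b + 1) • ∑ k ∈ range b, V k := by
    intro M
    induction M with
    | zero => simp
    | succ M ih =>
      rw [sum_range_succ_tsub_nsmul, ih, sum_range_succ_nsmul_pred_add_sum_range,
        sum_range_succ _ M]
  simp only [monoNabla, smul_sub, sum_sub_distrib, reflect, weighted, sub_self]

theorem sum_range_sub_sum_range_reflect (f : ℕ → G) (b c : ℕ) :
    ∑ k ∈ range b, f k - ∑ k ∈ range c, f k
      = ∑ k ∈ range b, f (b + c - 1 - k) - ∑ k ∈ range c, f (b + k) := by
  have h : ∑ k ∈ range b, f (c + k) = ∑ k ∈ range b, f (b + c - 1 - k) := by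
    rw [← sum_range_reflect]
    exact sum_congr rfl fun k hk => congr_arg f (by have := mem_range.mp hk; omega)
  rw [sub_eq_sub_iff_add_eq_add, ← sum_range_add, ← h, add_comm _ (∑ k ∈ range c, f k),
    ← sum_range_add, add_comm]

end Combinatorics

theorem star_pow_mul_pow_comm {R : Type*} [Monoid R] [StarMul R] (q : R) [IsStarNormal q]
    (m n : ℕ) : star q ^ m * q ^ n = q ^ n * star q ^ m :=
  (Commute.pow_pow IsStarNormal.star_comm_self m n).eq

section Monomial

variable (x : Fin 4 → ℝ)

theorem differentiable_mono (b c : ℕ) :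
    Differentiable ℝ (fun y => Zq y ^ b * star (Zq y) ^ c) := by
  fun_prop

theorem pdq_mono (i : Fin 4) (b c : ℕ) :
    pdq i (fun y => Zq y ^ b * star (Zq y) ^ c) x =
      (∑ k ∈ range b, Zq x ^ (b - 1 - k) * qe i * Zq x ^ k) * star (Zq x) ^ c
        + Zq x ^ b *
          ∑ k ∈ range c, star (Zq x) ^ (c - 1 - k) * star (qe i) * star (Zq x) ^ k := by
  rw [pdq_mul ((differentiable_Zq x).fun_pow b) ((differentiable_star_Zq x).fun_pow c),
    pdq_pow (differentiable_Zq x), pdq_pow (differentiable_star_Zq x), pdq_Zq, pdq_star_Zq]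

theorem DMinus_mono (b c : ℕ) :
    DMinus (fun y => Zq y ^ b * star (Zq y) ^ c) x =
      2 • monoNabla (fun k => Zq x ^ k * star (Zq x) ^ (b + c - 1 - k)) b c := by
  set M : ℕ → Hq := fun k => Zq x ^ k * star (Zq x) ^ (b + c - 1 - k) with hM
  have hZpart : ∑ i, star (qe i) *
      ((∑ k ∈ range b, Zq x ^ (b - 1 - k) * qe i * Zq x ^ k) * star (Zq x) ^ c)
      = 2 • (b • M (b - 1) + ∑ k ∈ range b, M k) := by
    calc _ = ∑ k ∈ range b, (∑ i, star (qe i) * Zq x ^ (b - 1 - k) * qe i) *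
          (Zq x ^ k * star (Zq x) ^ c) := by
          simp only [sum_mul, mul_sum, mul_assoc]; exact sum_comm
      _ = ∑ k ∈ range b, 2 • (M (b - 1) + M k) := by
          refine sum_congr rfl fun k hk => ?_
          have hk := mem_range.mp hk
          rw [sum_star_qe_mul_qe, smul_mul_assoc, add_mul, star_pow, ← mul_assoc, ← pow_add,
            ← mul_assoc (star (Zq x) ^ _), star_pow_mul_pow_comm, mul_assoc, ← pow_add, hM]
          congr 4 <;> omega
      _ = _ := by rw [← smul_sum, sum_add_distrib, sum_const, card_range]
  have hWpart : ∑ i, star (qe i) *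
      (Zq x ^ b * ∑ k ∈ range c, star (Zq x) ^ (c - 1 - k) * star (qe i) * star (Zq x) ^ k)
      = -(2 • ∑ k ∈ range c, M k) := by
    calc _ = ∑ k ∈ range c, (∑ i, star (qe i) * (Zq x ^ b * star (Zq x) ^ (c - 1 - k)) *
          star (qe i)) * star (Zq x) ^ k := by
          simp only [sum_mul, mul_sum, mul_assoc]; exact sum_comm
      _ = ∑ k ∈ range c, -(2 • M (c - 1 - k)) := by
          refine sum_congr rfl fun k hk => ?_
          have hk := mem_range.mp hk
          rw [sum_star_qe_mul_star_qe, neg_mul, smul_mul_assoc, star_mul, star_pow, star_pow,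
            star_star, mul_assoc, ← pow_add, hM]
          congr 4; omega
      _ = _ := by rw [sum_neg_distrib, ← smul_sum, sum_range_reflect M c]
  rw [DMinus_eq_sum]
  simp only [pdq_mono, mul_add, sum_add_distrib]
  rw [hZpart, hWpart, monoNabla]
  abel

theorem DMinusR_mono (b c : ℕ) :
    DMinusR (fun y => Zq y ^ b * star (Zq y) ^ c) x =
      2 • monoNabla (fun k => Zq x ^ k * star (Zq x) ^ (b + c - 1 - k)) b c := by
  set M : ℕ → Hq := fun k => Zq x ^ k * star (Zq x) ^ (b + c - 1 - k) with hM
  have hZpart : ∑ i, (∑ k ∈ range b, Zq x ^ (b - 1 - k) * qe i * Zq x ^ k) * star (Zq x) ^ c *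
      star (qe i) = 2 • (b • M (b - 1) + ∑ k ∈ range b, M (b + c - 1 - k)) := by
    calc _ = ∑ k ∈ range b, Zq x ^ (b - 1 - k) *
          ∑ i, qe i * (Zq x ^ k * star (Zq x) ^ c) * star (qe i) := by
          simp only [sum_mul, mul_sum, mul_assoc]; exact sum_comm
      _ = ∑ k ∈ range b, 2 • (M (b - 1) + M (b + c - 1 - k)) := by
          refine sum_congr rfl fun k hk => ?_
          have hk := mem_range.mp hk
          rw [sum_qe_mul_star_qe, mul_smul_comm, mul_add, star_mul, star_pow, star_pow, star_star,
            ← mul_assoc, ← mul_assoc, ← pow_add, ← pow_add, hM]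
          congr 4 <;> omega
      _ = _ := by rw [← smul_sum, sum_add_distrib, sum_const, card_range]
  have hWpart : ∑ i, Zq x ^ b *
      (∑ k ∈ range c, star (Zq x) ^ (c - 1 - k) * star (qe i) * star (Zq x) ^ k) * star (qe i)
      = -(2 • ∑ k ∈ range c, M (b + k)) := by
    calc _ = ∑ k ∈ range c, Zq x ^ b * star (Zq x) ^ (c - 1 - k) *
          ∑ i, star (qe i) * star (Zq x) ^ k * star (qe i) := by
          simp only [sum_mul, mul_sum, mul_assoc]; exact sum_comm
      _ = ∑ k ∈ range c, -(2 • M (b + k)) := by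
          refine sum_congr rfl fun k hk => ?_
          have hk := mem_range.mp hk
          rw [sum_star_qe_mul_star_qe, mul_neg, mul_smul_comm, star_pow, star_star, mul_assoc,
            star_pow_mul_pow_comm, ← mul_assoc, ← pow_add, hM]
          congr 4; omega
      _ = _ := by rw [sum_neg_distrib, ← smul_sum]
  rw [DMinusR_eq_sum]
  simp only [pdq_mono, add_mul, sum_add_distrib]
  rw [hZpart, hWpart, monoNabla, add_sub_assoc, sum_range_sub_sum_range_reflect M b c]
  abel

end Monomial

theorem lapq_mul_star_Zq {F : (Fin 4 → ℝ) → Hq} (hF : ContDiff ℝ 2 F) (x : Fin 4 → ℝ) :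
    lapq (fun y => F y * star (Zq y)) x = lapq F x * star (Zq x) + 2 • DMinusR F x := by
  have hF' : Differentiable ℝ F := hF.differentiable two_ne_zero
  have first : ∀ i, pdq i (fun y => F y * star (Zq y))
      = fun y => pdq i F y * star (Zq y) + F y * star (qe i) := fun i => funext fun y => by
    rw [pdq_mul (hF' y) (differentiable_star_Zq y), pdq_star_Zq]
  have second : ∀ i, pdq i (pdq i (fun y => F y * star (Zq y))) x
      = pdq i (pdq i F) x * star (Zq x) + 2 • (pdq i F x * star (qe i)) := fun i => by
    have hpdq : Differentiable ℝ (pdq i F) := hF.differentiable_pdq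
    rw [first, pdq_add (by fun_prop) (by fun_prop), pdq_mul (hpdq x) (differentiable_star_Zq x),
      pdq_mul (hF' x) (differentiableAt_const _), pdq_star_Zq, pdq_const, mul_zero, add_zero,
      two_nsmul, add_assoc]
  simp only [lapq, second, sum_add_distrib, ← sum_mul, DMinusR_eq_sum, smul_sum]

theorem lapq_star_Zq_pow (n : ℕ) (x : Fin 4 → ℝ) :
    lapq (fun y => star (Zq y) ^ n) x =
      (-4 : ℤ) •
        ∑ q ∈ range (n - 1), (n - 1 - q) • (Zq x ^ q * star (Zq x) ^ (n - 2 - q)) := by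
  induction n with
  | zero =>
    have hconst : ∀ i, pdq i (fun _ => (1 : Hq)) = fun _ => 0 :=
      fun i => funext fun _ => pdq_const 1
    simp [lapq, hconst, pdq_const]
  | succ n ih =>
    have hsplit : (fun y => star (Zq y) ^ (n + 1)) = fun y => star (Zq y) ^ n * star (Zq y) :=
      funext fun y => pow_succ _ n
    have hmono : (fun y => star (Zq y) ^ n) = fun y => Zq y ^ 0 * star (Zq y) ^ n :=
      funext fun y => (one_mul _).symm
    rw [hsplit, lapq_mul_star_Zq (by fun_prop), ih, hmono, DMinusR_mono]
    rcases n with _ | n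
    · simp [monoNabla]
    simp only [monoNabla, Nat.add_sub_cancel, zero_add, zero_smul, range_zero, sum_empty, zero_sub]
    have hW : ∀ b ∈ range n,
        (n - b) • (Zq x ^ b * star (Zq x) ^ (n + 1 - 2 - b)) * star (Zq x)
          = (n - b) • (Zq x ^ b * star (Zq x) ^ (n - b)) := fun b hb => by
      rw [smul_mul_assoc, mul_assoc, ← pow_succ, show n + 1 - 2 - b + 1 = n - b by
        have := mem_range.mp hb; omega]
    rw [sum_range_succ_tsub_nsmul, show n + 1 + 1 - 2 = n by omega, smul_mul_assoc, sum_mul,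
      sum_congr rfl hW]
    module

/-- for every `n ∈ ℕ`, the function `X ↦ (X⁺)ⁿ` satisfies
`∇□(X⁺)ⁿ = 0` and `(□(X⁺)ⁿ)∇ = 0`, i.e. it is quasi anti regular from both sides. -/
theorem conj_pow_quasi_anti_regular (n : ℕ) :
    (∀ x : Fin 4 → ℝ, DMinus (lapq (fun y => (star (Zq y)) ^ n)) x = 0) ∧
    (∀ x : Fin 4 → ℝ, DMinusR (lapq (fun y => (star (Zq y)) ^ n)) x = 0) := by
  have hlap : lapq (fun y => star (Zq y) ^ n) = fun y => ∑ q ∈ range (n - 1),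
      (-4 * ((n - 1 - q : ℕ) : ℤ)) • (Zq y ^ q * star (Zq y) ^ (n - 2 - q)) :=
    funext fun y => by
      rw [lapq_star_Zq_pow, smul_sum]
      simp only [mul_smul, natCast_zsmul]
  have hdiff : ∀ x, ∀ q ∈ range (n - 1),
      DifferentiableAt ℝ (fun y => Zq y ^ q * star (Zq y) ^ (n - 2 - q)) x :=
    fun x q _ => differentiable_mono q (n - 2 - q) x
  have hvanish : ∀ x, ∑ q ∈ range (n - 1), (-4 * ((n - 1 - q : ℕ) : ℤ)) •
      2 • monoNabla (fun k => Zq x ^ k * star (Zq x) ^ (q + (n - 2 - q) - 1 - k)) q (n - 2 - q)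
      = 0 := fun x => by
    calc _ = (-8 : ℤ) • ∑ q ∈ range (n - 1), (n - 1 - q) •
          monoNabla (fun k => Zq x ^ k * star (Zq x) ^ (n - 2 - 1 - k)) q (n - 1 - 1 - q) := by
          rw [smul_sum]
          refine sum_congr rfl fun q hq => ?_
          have := mem_range.mp hq
          rw [show q + (n - 2 - q) = n - 2 by omega, show n - 1 - 1 - q = n - 2 - q by omega]
          module
      _ = 0 := by rw [sum_range_tsub_nsmul_monoNabla_eq_zero, smul_zero]
  refine ⟨fun x => ?_, fun x => ?_⟩
  · rw [hlap, DMinus_sum_zsmul _ _ (hdiff x)]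
    simp only [DMinus_mono]
    exact hvanish x
  · rw [hlap, DMinusR_sum_zsmul _ _ (hdiff x)]
    simp only [DMinusR_mono]
    exact hvanish x
end
end

section
/- For every integer k and every C² function h on an open subset of ℝ⁴ (avoiding N(Z)=0 when k<0), one has □(N(Z)^k · h(Z)) = 4k N(Z)^{k−1} · (deg + k + 1)h(Z) + N(Z)^k · □h(Z), where deg = z⁰∂₀ + z¹∂₁ + z²∂₂ + z³∂₃ is the Euler degree operator. -/
/-!
Leibniz rule: `□(f g) = (□f) g + 2 ∇f·∇g + f □g`. For `f = N^k` one has `∂ᵢ N^k = 2k zⁱ N^{k-1}`,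
so `∇N^k·∇h = 2k N^{k-1} deg h`, and `□N^k = 4k(k+1) N^{k-1}`, using `∑ (zⁱ)² = N` and
that the dimension is `4`.
-/

noncomputable section

/-- Real partial derivative `∂/∂zⁱ`. -/
def pdr (i : Fin 4) (f : (Fin 4 → ℝ) → ℝ) : (Fin 4 → ℝ) → ℝ :=
  fun x => fderiv ℝ f x (Pi.single i 1)

/-- The four-dimensional Laplacian. -/
def lapr (f : (Fin 4 → ℝ) → ℝ) : (Fin 4 → ℝ) → ℝ :=
  fun x => ∑ i : Fin 4, pdr i (pdr i f) x

/-- The Euler degree operator `deg = ∑ᵢ zⁱ∂ᵢ`. -/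
def degr (f : (Fin 4 → ℝ) → ℝ) : (Fin 4 → ℝ) → ℝ :=
  fun x => ∑ i : Fin 4, x i * pdr i f x

/-- `N(Z) = (z⁰)² + (z¹)² + (z²)² + (z³)²`. -/
def Nr (x : Fin 4 → ℝ) : ℝ := ∑ i : Fin 4, x i ^ 2

theorem ContDiffAt.zpow {𝕜 E : Type*} [NontriviallyNormedField 𝕜] [CompleteSpace 𝕜]
    [NormedAddCommGroup E] [NormedSpace 𝕜 E] {f : E → 𝕜} {x : E} {n : WithTop ℕ∞} {m : ℤ}
    (hf : ContDiffAt 𝕜 n f x) (h : f x ≠ 0 ∨ 0 ≤ m) :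
    ContDiffAt 𝕜 n (fun y => f y ^ m) x := by
  rcases le_or_gt 0 m with hm | hm
  · lift m to ℕ using hm
    simpa using hf.pow m
  · refine ((hf.pow m.natAbs).inv (pow_ne_zero _ (h.resolve_right hm.not_ge))).congr_of_eventuallyEq
      (.of_forall fun y => ?_)
    simp only [Pi.inv_apply, ← zpow_natCast, ← zpow_neg, Int.ofNat_natAbs_of_nonpos hm.le, neg_neg]

/-- The factor `k - 1` makes this hold at `t = 0` too: it vanishes in the one case, `k = 1`,
where `0 ^ (k - 2) * 0 ≠ 0 ^ (k - 1)`. -/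
theorem sub_one_mul_zpow_sub_two_mul_self {K : Type*} [DivisionRing K] (t : K) (k : ℤ) :
    ((k : K) - 1) * t ^ (k - 2) * t = ((k : K) - 1) * t ^ (k - 1) := by
  rcases eq_or_ne k 1 with rfl | hk
  · simp
  · have hadd := zpow_add' (a := t) (m := k - 2) (n := 1) (.inr (.inl (by omega)))
    rw [show k - 2 + 1 = k - 1 by ring, zpow_one] at hadd
    rw [mul_assoc, ← hadd]

section Leibniz

variable {f g : (Fin 4 → ℝ) → ℝ} {x : Fin 4 → ℝ}

theorem Filter.EventuallyEq.pdr_eq (h : f =ᶠ[nhds x] g) (i : Fin 4) :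
    pdr i f x = pdr i g x := by
  simp only [pdr, h.fderiv_eq]

theorem ContDiffAt.pdr {n : WithTop ℕ∞} (hf : ContDiffAt ℝ (n + 1) f x) (i : Fin 4) :
    ContDiffAt ℝ n (pdr i f) x :=
  (hf.fderiv_right le_rfl).clm_apply contDiffAt_const

theorem pdr_add (hf : DifferentiableAt ℝ f x) (hg : DifferentiableAt ℝ g x) (i : Fin 4) :
    pdr i (fun y => f y + g y) x = pdr i f x + pdr i g x := by
  simp [pdr, fderiv_fun_add hf hg]

theorem pdr_mul (hf : DifferentiableAt ℝ f x) (hg : DifferentiableAt ℝ g x) (i : Fin 4) :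
    pdr i (fun y => f y * g y) x = pdr i f x * g x + f x * pdr i g x := by
  simp only [pdr, fderiv_fun_mul hf hg, add_apply, smul_apply, smul_eq_mul]
  ring

theorem pdr_const_mul (i : Fin 4) (c : ℝ) :
    pdr i (fun y => c * f y) x = c * pdr i f x := by
  simp only [pdr]
  rw [show (fun y => c * f y) = c • f from rfl, fderiv_const_smul_field]
  rfl

theorem pdr_apply_self (i : Fin 4) : pdr i (fun y => y i) x = 1 := by
  simp [pdr, fderiv_apply]

theorem pdr_pdr_mul (hf : ContDiffAt ℝ 2 f x) (hg : ContDiffAt ℝ 2 g x) (i : Fin 4) :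
    pdr i (pdr i (fun y => f y * g y)) x
      = pdr i (pdr i f) x * g x + 2 * (pdr i f x * pdr i g x) + f x * pdr i (pdr i g) x := by
  have hdiff {u : (Fin 4 → ℝ) → ℝ} (hu : ContDiffAt ℝ 2 u x) :
      ∀ᶠ y in nhds x, DifferentiableAt ℝ u y :=
    (hu.eventually (by simp)).mono fun _ hy => hy.differentiableAt two_ne_zero
  have hpdr {u : (Fin 4 → ℝ) → ℝ} (hu : ContDiffAt ℝ 2 u x) : DifferentiableAt ℝ (pdr i u) x :=
    (ContDiffAt.pdr (n := 1) hu i).differentiableAt one_ne_zero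
  have hfx := (hdiff hf).self_of_nhds
  have hgx := (hdiff hg).self_of_nhds
  have hfirst : pdr i (fun y => f y * g y) =ᶠ[nhds x]
      fun y => pdr i f y * g y + f y * pdr i g y :=
    ((hdiff hf).and (hdiff hg)).mono fun y hy => pdr_mul hy.1 hy.2 i
  rw [hfirst.pdr_eq, pdr_add ((hpdr hf).fun_mul hgx) (hfx.fun_mul (hpdr hg)),
    pdr_mul (hpdr hf) hgx, pdr_mul hfx (hpdr hg)]
  ring

theorem lapr_mul (hf : ContDiffAt ℝ 2 f x) (hg : ContDiffAt ℝ 2 g x) :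
    lapr (fun y => f y * g y) x
      = lapr f x * g x + 2 * ∑ i, pdr i f x * pdr i g x + f x * lapr g x := by
  simp only [lapr, pdr_pdr_mul hf hg, Finset.sum_add_distrib, Finset.sum_mul, Finset.mul_sum]

theorem pdr_zpow {m : ℤ} (hf : DifferentiableAt ℝ f x) (h : f x ≠ 0 ∨ 0 ≤ m) (i : Fin 4) :
    pdr i (fun y => f y ^ m) x = m * f x ^ (m - 1) * pdr i f x := by
  have hcomp := ((hasDerivAt_zpow m _ h).comp_hasFDerivAt x hf.hasFDerivAt).fderiv
  simp only [pdr, Function.comp_def] at hcomp ⊢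
  simp [hcomp, mul_assoc]

end Leibniz

section PowersOfN

variable {x : Fin 4 → ℝ} {k : ℤ}

theorem contDiff_Nr {n : WithTop ℕ∞} : ContDiff ℝ n Nr := by
  unfold Nr; fun_prop

theorem pdr_Nr (i : Fin 4) (x : Fin 4 → ℝ) : pdr i Nr x = 2 * x i := by
  unfold pdr Nr
  rw [fderiv_fun_sum (fun j _ => by fun_prop)]
  have hsq (j : Fin 4) : fderiv ℝ (fun y : Fin 4 → ℝ => y j ^ 2) x
      = (2 * x j) • ContinuousLinearMap.proj j := by
    rw [fderiv_fun_pow 2 (by fun_prop)]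
    simp [fderiv_apply]
  simp [hsq, Pi.single_apply]

theorem pdr_Npow (h : Nr x ≠ 0 ∨ 0 ≤ k) (i : Fin 4) :
    pdr i (fun y => Nr y ^ k) x = k * Nr x ^ (k - 1) * (2 * x i) := by
  rw [pdr_zpow ((contDiff_Nr (n := 1)).differentiable one_ne_zero x) h, pdr_Nr]

theorem pdr_pdr_Npow (h : Nr x ≠ 0 ∨ 0 ≤ k) (i : Fin 4) :
    pdr i (pdr i (fun y => Nr y ^ k)) x
      = 4 * k * (k - 1) * Nr x ^ (k - 2) * x i ^ 2 + 2 * k * Nr x ^ (k - 1) := by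
  -- `k = 0` is split off since `N ^ (k - 1)` need not be differentiable at `N = 0` then.
  rcases eq_or_ne k 0 with rfl | hk0
  · unfold pdr
    simp
  have hnear : ∀ᶠ y in nhds x, Nr y ≠ 0 ∨ 0 ≤ k := h.elim
    (fun hN => ((contDiff_Nr (n := 0)).continuous.continuousAt.eventually_ne hN).mono
      fun _ => Or.inl)
    (fun hk => .of_forall fun _ => Or.inr hk)
  have hk1 : Nr x ≠ 0 ∨ 0 ≤ k - 1 := h.imp_right fun hk => by omega
  have hdN : DifferentiableAt ℝ (fun y => (k : ℝ) * Nr y ^ (k - 1)) x :=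
    (((contDiff_Nr (n := 1)).differentiable one_ne_zero x).zpow hk1).const_mul _
  have hfirst : pdr i (fun y => Nr y ^ k) =ᶠ[nhds x] fun y => k * Nr y ^ (k - 1) * (2 * y i) :=
    hnear.mono fun y hy => pdr_Npow hy i
  rw [hfirst.pdr_eq, pdr_mul hdN (by fun_prop), pdr_const_mul, pdr_Npow hk1, pdr_const_mul,
    pdr_apply_self, show k - 1 - 1 = k - 2 by ring]
  push_cast
  ring

theorem lapr_Npow (h : Nr x ≠ 0 ∨ 0 ≤ k) :
    lapr (fun y => Nr y ^ k) x = 4 * k * (k + 1) * Nr x ^ (k - 1) := by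
  simp only [lapr, pdr_pdr_Npow h, Finset.sum_add_distrib, ← Finset.mul_sum, Finset.sum_const,
    Finset.card_univ, Fintype.card_fin, nsmul_eq_mul]
  rw [show ∑ i, x i ^ 2 = Nr x from rfl]
  linear_combination (4 * (k : ℝ)) * sub_one_mul_zpow_sub_two_mul_self (Nr x) k

end PowersOfN

/-- for every `k ∈ ℤ` and every C² function `h` on an open subset of ℝ⁴
(avoiding `N(Z) = 0` when `k < 0`),
`□(N^k h) = 4k N^{k−1}((deg + k + 1)h) + N^k □h`. -/
theorem laplacian_Npow_mul (U : Set (Fin 4 → ℝ)) (hU : IsOpen U) (k : ℤ)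
    (h : (Fin 4 → ℝ) → ℝ) (hh : ContDiffOn ℝ 2 h U)
    (hk : k < 0 → ∀ x ∈ U, Nr x ≠ 0) :
    ∀ x ∈ U, lapr (fun y => Nr y ^ k * h y) x
      = 4 * (k : ℝ) * Nr x ^ (k - 1) * (degr h x + ((k : ℝ) + 1) * h x)
        + Nr x ^ k * lapr h x := by
  intro x hx
  have hN : Nr x ≠ 0 ∨ 0 ≤ k := (lt_or_ge k 0).imp (fun hneg => hk hneg x hx) id
  have hgrad : ∑ i, pdr i (fun y => Nr y ^ k) x * pdr i h x
      = 2 * k * Nr x ^ (k - 1) * degr h x := by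
    simp only [pdr_Npow hN, degr, Finset.mul_sum]
    congr! 1 with i
    ring
  rw [lapr_mul (contDiff_Nr.contDiffAt.zpow hN) (hh.contDiffAt (hU.mem_nhds hx)), lapr_Npow hN,
    hgrad]
  ring
end
end

section
/- The functions f⁽¹⁾_{l,m,n}(Z) = (t^l_{n−½,m}(Z), −t^l_{n+½,m}(Z))ᵀ are left anti regular: ∇ f⁽¹⁾_{l,m,n} = 0, where t^l_{n,m}(Z) = (1/2πi)∮ (s z₁₁ + z₂₁)^{l−m}(s z₁₂ + z₂₂)^{l+m} s^{−l+n} ds/s are the SU(2) matrix coefficients extended as polynomials on 2×2 complex matrices Z. -/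
noncomputable section

/-- The SU(2) matrix coefficient `t^l_{n,m}` in the parametrization `a = l − m`,
`b = l + m`, `k = n − l`:
`T a b k (Z) = (1/2πi) ∮_{|s|=1} (s z₁₁ + z₂₁)^a (s z₁₂ + z₂₂)^b s^k ds/s`,
regarded as a polynomial in the entries of the 2×2 complex matrix `Z`. -/
def Tc (a b : ℕ) (k : ℤ) (Z : Fin 2 → Fin 2 → ℂ) : ℂ :=
  (2 * (Real.pi : ℂ) * Complex.I)⁻¹ *
    circleIntegral (fun s => (s * Z 0 0 + Z 1 0) ^ a * (s * Z 0 1 + Z 1 1) ^ b * s ^ (k - 1)) 0 1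

/-- The partial derivative `∂ᵢⱼ = ∂/∂zᵢⱼ` in the entries of a 2×2 complex matrix. -/
def mpd (i j : Fin 2) (f : (Fin 2 → Fin 2 → ℂ) → ℂ) : (Fin 2 → Fin 2 → ℂ) → ℂ :=
  fun Z => fderiv ℂ f Z (Pi.single i (Pi.single j 1))

/-!
Differentiating under the integral sign, `Tc a b k` has derivative
`(2πi)⁻¹ ∮ s^(k-1) Dh((s,1)Z) ((s,1)E) ds` in the direction `E`, where `h v = v₁^a v₂^b`: the
integrand depends on `Z` only through the row vector `(s, 1) Z`. For `E = E₁ⱼ` we have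
`(s, 1) E₁ⱼ = s · (s, 1) E₂ⱼ`, and the extra factor `s` turns `s^(k-1)` into `s^k`, so
`∂₁ⱼ t_k = ∂₂ⱼ t_(k+1)`: exactly the cancellation in both components of `∇f⁽¹⁾`.
-/

open Set Metric Function

section CircleIntegral

variable {E G : Type*} [NormedAddCommGroup E] [NormedSpace ℂ E]
  [NormedAddCommGroup G] [NormedSpace ℂ G]

theorem ContinuousOn.continuous_circleIntegrand {f : ℂ → G} {c : ℂ} {R : ℝ}
    (hf : ContinuousOn f (sphere c |R|)) :
    Continuous fun θ => deriv (circleMap c R) θ • f (circleMap c R θ) := by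
  simp only [deriv_circleMap]
  exact ((continuous_circleMap 0 R).mul continuous_const).smul
    (hf.comp_continuous (continuous_circleMap c R) (circleMap_mem_sphere' c R))

theorem ContinuousLinearMap.circleIntegral_apply {φ : ℂ → E →L[ℂ] G} {c : ℂ} {R : ℝ}
    (hφ : ContinuousOn φ (sphere c |R|)) (v : E) :
    (∮ s in C(c, R), φ s) v = ∮ s in C(c, R), φ s v := by
  simp only [circleIntegral]
  rw [ContinuousLinearMap.intervalIntegral_apply
    (hφ.continuous_circleIntegrand.intervalIntegrable _ _)]
  rfl

theorem hasFDerivAt_circleIntegral [ProperSpace E] {F : E → ℂ → G} {F' : E → ℂ → E →L[ℂ] G}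
    {c : ℂ} {R : ℝ} (hF : ContinuousOn (uncurry F) (univ ×ˢ sphere c |R|))
    (hF' : ContinuousOn (uncurry F') (univ ×ˢ sphere c |R|))
    (hdiff : ∀ x, ∀ s ∈ sphere c |R|, HasFDerivAt (F · s) (F' x s) x) (x₀ : E) :
    HasFDerivAt (fun x => ∮ s in C(c, R), F x s) (∮ s in C(c, R), F' x₀ s) x₀ := by
  have hFx (x : E) : ContinuousOn (F x) (sphere c |R|) :=
    hF.comp (continuousOn_const.prodMk continuousOn_id) fun s hs => ⟨trivial, hs⟩
  have hF'x₀ : ContinuousOn (F' x₀) (sphere c |R|) :=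
    hF'.comp (continuousOn_const.prodMk continuousOn_id) fun s hs => ⟨trivial, hs⟩
  -- the domination bound: `F'` is bounded on the compact set `closedBall x₀ 1 × sphere c |R|`
  obtain ⟨C, hC⟩ := ((isCompact_closedBall x₀ 1).prod (isCompact_sphere c |R|))
    |>.exists_bound_of_continuousOn (hF'.mono (prod_mono (subset_univ _) subset_rfl))
  refine intervalIntegral.hasFDerivAt_integral_of_dominated_of_fderiv_le
    (F' := fun x θ => deriv (circleMap c R) θ • F' x (circleMap c R θ))
    (bound := fun _ => |R| * C) (ball_mem_nhds x₀ one_pos)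
    (Filter.Eventually.of_forall fun x => (hFx x).continuous_circleIntegrand.aestronglyMeasurable)
    ((hFx x₀).continuous_circleIntegrand.intervalIntegrable _ _)
    hF'x₀.continuous_circleIntegrand.aestronglyMeasurable ?_ intervalIntegrable_const ?_
  · refine Filter.Eventually.of_forall fun θ _ x hx => ?_
    rw [norm_smul, deriv_circleMap, norm_mul, norm_circleMap_zero, Complex.norm_I, mul_one]
    exact mul_le_mul_of_nonneg_left
      (hC (x, circleMap c R θ) ⟨ball_subset_closedBall hx, circleMap_mem_sphere' c R θ⟩)
      (abs_nonneg R)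
  · exact Filter.Eventually.of_forall fun θ _ x _ =>
      (hdiff x _ (circleMap_mem_sphere' c R θ)).const_smul _

end CircleIntegral

/-- `Z ↦ (s, 1) Z`, whose entries are the linear forms `s z₁ⱼ + z₂ⱼ` in the integrand of `Tc`. -/
def rowComb (s : ℂ) : (Fin 2 → Fin 2 → ℂ) →L[ℂ] (Fin 2 → ℂ) :=
  s • ContinuousLinearMap.proj 0 + ContinuousLinearMap.proj 1

theorem continuous_rowComb : Continuous rowComb :=
  (continuous_id.smul continuous_const).add continuous_const

theorem rowComb_single_zero (s : ℂ) (v : Fin 2 → ℂ) :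
    rowComb s (Pi.single 0 v) = s • rowComb s (Pi.single 1 v) := by
  simp [rowComb]

def rowTransform (h : (Fin 2 → ℂ) → ℂ) (k : ℤ) (Z : Fin 2 → Fin 2 → ℂ) : ℂ :=
  (2 * (Real.pi : ℂ) * Complex.I)⁻¹ * ∮ s in C(0, 1), h (rowComb s Z) * s ^ (k - 1)

theorem Tc_eq_rowTransform (a b : ℕ) (k : ℤ) :
    Tc a b k = rowTransform (fun v => v 0 ^ a * v 1 ^ b) k :=
  rfl

theorem mpd_rowTransform {h : (Fin 2 → ℂ) → ℂ} (hh : ContDiff ℂ 1 h) (k : ℤ) (i j : Fin 2)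
    (Z : Fin 2 → Fin 2 → ℂ) :
    mpd i j (rowTransform h k) Z = (2 * (Real.pi : ℂ) * Complex.I)⁻¹ *
      ∮ s in C(0, 1), s ^ (k - 1) *
        fderiv ℂ h (rowComb s Z) (rowComb s (Pi.single i (Pi.single j 1))) := by
  have hrow : Continuous fun p : (Fin 2 → Fin 2 → ℂ) × ℂ => rowComb p.2 p.1 :=
    (continuous_rowComb.comp continuous_snd).clm_apply continuous_fst
  have hzpow : ContinuousOn (fun p : (Fin 2 → Fin 2 → ℂ) × ℂ => p.2 ^ (k - 1))
      (univ ×ˢ sphere 0 |1|) :=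
    continuous_snd.continuousOn.zpow₀ _ fun p hp =>
      Or.inl (ne_zero_of_mem_sphere (by norm_num) ⟨_, hp.2⟩)
  have hF' : ContinuousOn
      (uncurry fun Z s => s ^ (k - 1) • (fderiv ℂ h (rowComb s Z)).comp (rowComb s))
      (univ ×ˢ sphere 0 |1|) :=
    hzpow.smul ((hh.continuous_fderiv one_ne_zero).comp hrow
      |>.clm_comp (continuous_rowComb.comp continuous_snd)).continuousOn
  have hT : HasFDerivAt (rowTransform h k) ((2 * (Real.pi : ℂ) * Complex.I)⁻¹ • _) Z :=
    (hasFDerivAt_circleIntegral (F := fun Z s => h (rowComb s Z) * s ^ (k - 1))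
      ((hh.continuous.comp hrow).continuousOn.mul hzpow) hF'
      (fun Z s _ => ((hh.differentiable one_ne_zero _).hasFDerivAt.comp Z
        (rowComb s).hasFDerivAt).mul_const _) Z).const_mul _
  rw [mpd, hT.fderiv, smul_apply, smul_eq_mul, ContinuousLinearMap.circleIntegral_apply
    (φ := fun s => s ^ (k - 1) • (fderiv ℂ h (rowComb s Z)).comp (rowComb s))
    (hF'.comp (continuousOn_const.prodMk continuousOn_id) fun s hs => ⟨trivial, hs⟩)]
  rfl

theorem mpd_zero_rowTransform {h : (Fin 2 → ℂ) → ℂ} (hh : ContDiff ℂ 1 h) (k : ℤ) (j : Fin 2)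
    (Z : Fin 2 → Fin 2 → ℂ) :
    mpd 0 j (rowTransform h k) Z = mpd 1 j (rowTransform h (k + 1)) Z := by
  rw [mpd_rowTransform hh, mpd_rowTransform hh]
  congr 1
  refine circleIntegral.integral_congr zero_le_one fun s hs => ?_
  have hs0 : s ≠ 0 := ne_zero_of_mem_sphere one_ne_zero ⟨s, hs⟩
  rw [rowComb_single_zero, map_smul, smul_eq_mul, add_sub_cancel_right, ← mul_assoc,
    ← zpow_add_one₀ hs0, sub_add_cancel]

theorem mpd_neg (i j : Fin 2) (f : (Fin 2 → Fin 2 → ℂ) → ℂ) (Z : Fin 2 → Fin 2 → ℂ) :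
    mpd i j (fun W => -f W) Z = -mpd i j f Z := by
  rw [mpd, mpd, fderiv_fun_neg, neg_apply]

-- The conjuncts are the two components of `∇f⁽¹⁾_{l,m,n}`, with `a = l − m`, `b = l + m`,
-- `k = n − l − ½`.
theorem f1_left_anti_regular_general (a b : ℕ) (k : ℤ) :
    ∀ Z : Fin 2 → Fin 2 → ℂ,
      2 * (mpd 0 0 (fun W => Tc a b k W) Z + mpd 1 0 (fun W => -Tc a b (k + 1) W) Z) = 0 ∧
      2 * (mpd 0 1 (fun W => Tc a b k W) Z + mpd 1 1 (fun W => -Tc a b (k + 1) W) Z) = 0 := by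
  intro Z
  have hshift (j : Fin 2) : mpd 0 j (Tc a b k) Z = mpd 1 j (Tc a b (k + 1)) Z := by
    rw [Tc_eq_rowTransform, Tc_eq_rowTransform]
    exact mpd_zero_rowTransform (by fun_prop) k j Z
  simp only [mpd_neg, hshift, add_neg_cancel, mul_zero, and_self]

/-- the functions
`f⁽¹⁾_{l,m,n}(Z) = (t^l_{n−½,m}(Z), −t^l_{n+½,m}(Z))ᵀ` are left anti regular:
`∇f⁽¹⁾ = 2∂f⁽¹⁾ = 0`, where `∂ = ((∂₁₁, ∂₂₁), (∂₁₂, ∂₂₂))` acts on column vectors.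
Here `a = l − m`, `b = l + m` and `k = −l + n − ½ ∈ {−(a+b)−1, …, 0}` encodes
`l ∈ ½ℤ_{≥0}`, `m ∈ {−l,…,l}`, `n ∈ {−l−½,…,l+½}`. -/
theorem f1_left_anti_regular (a b : ℕ) (k : ℤ)
    (hk1 : -(a + b : ℤ) - 1 ≤ k) (hk2 : k ≤ 0) :
    ∀ Z : Fin 2 → Fin 2 → ℂ,
      2 * (mpd 0 0 (fun W => Tc a b k W) Z + mpd 1 0 (fun W => -Tc a b (k + 1) W) Z) = 0 ∧
      2 * (mpd 0 1 (fun W => Tc a b k W) Z + mpd 1 1 (fun W => -Tc a b (k + 1) W) Z) = 0 :=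
  f1_left_anti_regular_general a b k
end
end

section
/- The SU(2) matrix coefficients satisfy the derivative identity ∂ t^l_{n,m}(Z) = ((l−m) t^{l−½}_{n+½,m+½}(Z), (l−m) t^{l−½}_{n−½,m+½}(Z); (l+m) t^{l−½}_{n+½,m−½}(Z), (l+m) t^{l−½}_{n−½,m−½}(Z)), i.e. the 2×2 matrix of partial derivatives ∂ᵢⱼ t^l_{n,m} equals the stated matrix of lower matrix coefficients. -/
/-!
Restricted to a line `Z + t • E` through a matrix unit, only one linear factor of the
integrand moves: by `t * s` when `E` is in the first row and by `t` when it is in the second.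
Expanding that factor binomially writes `Tc a b k (Z + t • E)` as a polynomial in `t` whose
`m`-th coefficient is `choose * Tc` with the exponent lowered by `m` (and, in the first row, `k`
raised by `m`), so the derivative at `t = 0` is the linear coefficient. This line derivative is
the partial derivative because `Tc` is differentiable: expanding the integrand into monomials in
the entries of `Z` times Laurent monomials in `s` makes `Tc` a polynomial in `Z`.
-/

noncomputable section

open Finset Metric

theorem hasDerivAt_sum_choose_mul_pow {𝕜 : Type*} [NontriviallyNormedField 𝕜] (n : ℕ)
    (c : ℕ → 𝕜) :
    HasDerivAt (fun t => ∑ m ∈ range (n + 1), n.choose m * t ^ m * c m) (n * c 1) 0 := by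
  refine (HasDerivAt.fun_sum fun m _ =>
    ((hasDerivAt_pow m (0 : 𝕜)).const_mul (n.choose m : 𝕜)).mul_const (c m)).congr_deriv ?_
  rw [sum_eq_single 1]
  · simp
  · intro m _ hm
    rcases m with _ | _ | m <;> simp_all
  · intro h
    simp_all

theorem fderiv_apply_eq_of_eq_sum_choose_mul_pow {𝕜 E : Type*} [NontriviallyNormedField 𝕜]
    [NormedAddCommGroup E] [NormedSpace 𝕜 E] {f : E → 𝕜} {x v : E}
    (hf : DifferentiableAt 𝕜 f x) {n : ℕ} {c : ℕ → 𝕜}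
    (h : ∀ t : 𝕜, f (x + t • v) = ∑ m ∈ range (n + 1), n.choose m * t ^ m * c m) :
    fderiv 𝕜 f x v = n * c 1 := by
  have hline : HasLineDerivAt 𝕜 f (n * c 1) x v := by
    simpa only [HasLineDerivAt, h] using hasDerivAt_sum_choose_mul_pow n c
  rw [← hf.lineDeriv_eq_fderiv, hline.lineDeriv]

theorem circleIntegral_add_pow_mul {f g h : ℂ → ℂ} {c : ℂ} {R : ℝ} (hR : 0 ≤ R)
    (hf : ContinuousOn f (sphere c R)) (hg : ContinuousOn g (sphere c R))
    (hh : ContinuousOn h (sphere c R)) (t : ℂ) (n : ℕ) :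
    (∮ z in C(c, R), (t * f z + g z) ^ n * h z) =
      ∑ m ∈ range (n + 1),
        n.choose m * t ^ m * ∮ z in C(c, R), f z ^ m * g z ^ (n - m) * h z := by
  simp_rw [add_pow, sum_mul]
  rw [circleIntegral.integral_fun_sum fun m _ =>
    (by fun_prop : ContinuousOn _ _).circleIntegrable hR]
  refine sum_congr rfl fun m _ => ?_
  rw [← circleIntegral.integral_const_mul]
  congr 1 with z
  ring

theorem differentiable_circleIntegral_sum_mul {E ι : Type*} [NormedAddCommGroup E]
    [NormedSpace ℂ E] (s : Finset ι) {p : ι → E → ℂ} {q : ι → ℂ → ℂ} {c : ℂ} {R : ℝ}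
    (hp : ∀ i ∈ s, Differentiable ℂ (p i)) (hq : ∀ i ∈ s, CircleIntegrable (q i) c R) :
    Differentiable ℂ fun x => ∮ z in C(c, R), ∑ i ∈ s, p i x * q i z := by
  have hlin : ∀ x, (∮ z in C(c, R), ∑ i ∈ s, p i x * q i z) =
      ∑ i ∈ s, p i x * ∮ z in C(c, R), q i z := fun x => by
    rw [circleIntegral.integral_fun_sum (f := fun i z => p i x * q i z)
      fun i hi => (hq i hi).const_smul]
    simp_rw [circleIntegral.integral_const_mul]
  simp_rw [hlin]
  exact Differentiable.fun_sum fun i hi => (hp i hi).mul_const _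

@[fun_prop]
theorem continuousOn_zpow_sphere (k : ℤ) : ContinuousOn (fun z : ℂ => z ^ k) (sphere 0 1) :=
  continuousOn_zpow₀ k |>.mono fun z hz => ne_zero_of_mem_sphere one_ne_zero ⟨z, hz⟩

theorem pow_mul_zpow_sub_one {G₀ : Type*} [GroupWithZero G₀] {s : G₀} (hs : s ≠ 0) (m : ℕ)
    (k : ℤ) : s ^ m * s ^ (k - 1) = s ^ (k + m - 1) := by
  rw [← zpow_natCast, ← zpow_add₀ hs]
  congr 1
  ring

abbrev matrixUnit (i j : Fin 2) : Fin 2 → Fin 2 → ℂ := Pi.single i (Pi.single j 1)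

section Tc

variable (a b : ℕ) (k : ℤ) (Z : Fin 2 → Fin 2 → ℂ)

theorem differentiable_Tc : Differentiable ℂ (Tc a b k) := by
  have hTc : Tc a b k = fun W => (2 * (Real.pi : ℂ) * Complex.I)⁻¹ * ∮ s in C(0, 1),
      ∑ ij ∈ range (a + 1) ×ˢ range (b + 1),
        W 0 0 ^ ij.1 * W 1 0 ^ (a - ij.1) * W 0 1 ^ ij.2 * W 1 1 ^ (b - ij.2) *
          (a.choose ij.1 * b.choose ij.2 * s ^ (ij.1 + ij.2) * s ^ (k - 1)) := by
    funext W
    rw [Tc]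
    congr 2 with s
    rw [add_pow, add_pow, sum_mul_sum, sum_product, sum_mul]
    refine sum_congr rfl fun i _ => ?_
    rw [sum_mul]
    refine sum_congr rfl fun j _ => ?_
    ring
  rw [hTc]
  refine (differentiable_circleIntegral_sum_mul _ (fun ij _ => ?_) fun ij _ => ?_).const_mul _
  · fun_prop
  · exact ((continuous_const.mul (continuous_pow _)).continuousOn.mul
      (continuousOn_zpow_sphere _)).circleIntegrable zero_le_one

theorem Tc_add_smul_matrixUnit_zero_zero (t : ℂ) :
    Tc a b k (Z + t • matrixUnit 0 0) =
      ∑ m ∈ range (a + 1), a.choose m * t ^ m * Tc (a - m) b (k + m) Z := by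
  calc Tc a b k (Z + t • matrixUnit 0 0)
      = (2 * (Real.pi : ℂ) * Complex.I)⁻¹ * ∮ s in C(0, 1),
          (t * s + (s * Z 0 0 + Z 1 0)) ^ a * ((s * Z 0 1 + Z 1 1) ^ b * s ^ (k - 1)) := by
        simp only [Tc, matrixUnit]
        congr 2 with s
        simp
        ring
    _ = _ := by
        rw [circleIntegral_add_pow_mul (f := fun s => s) (g := fun s => s * Z 0 0 + Z 1 0)
          (h := fun s => (s * Z 0 1 + Z 1 1) ^ b * s ^ (k - 1)) zero_le_one (by fun_prop)
          (by fun_prop) (by fun_prop), mul_sum]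
        refine sum_congr rfl fun m _ => ?_
        rw [Tc, mul_left_comm]
        congr 2
        refine circleIntegral.integral_congr zero_le_one fun s hs => ?_
        rw [← pow_mul_zpow_sub_one (ne_zero_of_mem_sphere one_ne_zero ⟨s, hs⟩)]
        ring

theorem Tc_add_smul_matrixUnit_one_zero (t : ℂ) :
    Tc a b k (Z + t • matrixUnit 1 0) =
      ∑ m ∈ range (a + 1), a.choose m * t ^ m * Tc (a - m) b k Z := by
  calc Tc a b k (Z + t • matrixUnit 1 0)
      = (2 * (Real.pi : ℂ) * Complex.I)⁻¹ * ∮ s in C(0, 1),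
          (t * 1 + (s * Z 0 0 + Z 1 0)) ^ a * ((s * Z 0 1 + Z 1 1) ^ b * s ^ (k - 1)) := by
        simp only [Tc, matrixUnit]
        congr 2 with s
        simp
        ring
    _ = _ := by
        rw [circleIntegral_add_pow_mul (f := fun _ => 1) (g := fun s => s * Z 0 0 + Z 1 0)
          (h := fun s => (s * Z 0 1 + Z 1 1) ^ b * s ^ (k - 1)) zero_le_one (by fun_prop)
          (by fun_prop) (by fun_prop), mul_sum]
        refine sum_congr rfl fun m _ => ?_
        rw [Tc, mul_left_comm]
        congr 2
        refine circleIntegral.integral_congr zero_le_one fun s _ => ?_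
        ring

theorem Tc_add_smul_matrixUnit_zero_one (t : ℂ) :
    Tc a b k (Z + t • matrixUnit 0 1) =
      ∑ m ∈ range (b + 1), b.choose m * t ^ m * Tc a (b - m) (k + m) Z := by
  calc Tc a b k (Z + t • matrixUnit 0 1)
      = (2 * (Real.pi : ℂ) * Complex.I)⁻¹ * ∮ s in C(0, 1),
          (t * s + (s * Z 0 1 + Z 1 1)) ^ b * ((s * Z 0 0 + Z 1 0) ^ a * s ^ (k - 1)) := by
        simp only [Tc, matrixUnit]
        congr 2 with s
        simp
        ring
    _ = _ := by
        rw [circleIntegral_add_pow_mul (f := fun s => s) (g := fun s => s * Z 0 1 + Z 1 1)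
          (h := fun s => (s * Z 0 0 + Z 1 0) ^ a * s ^ (k - 1)) zero_le_one (by fun_prop)
          (by fun_prop) (by fun_prop), mul_sum]
        refine sum_congr rfl fun m _ => ?_
        rw [Tc, mul_left_comm]
        congr 2
        refine circleIntegral.integral_congr zero_le_one fun s hs => ?_
        rw [← pow_mul_zpow_sub_one (ne_zero_of_mem_sphere one_ne_zero ⟨s, hs⟩)]
        ring

theorem Tc_add_smul_matrixUnit_one_one (t : ℂ) :
    Tc a b k (Z + t • matrixUnit 1 1) =
      ∑ m ∈ range (b + 1), b.choose m * t ^ m * Tc a (b - m) k Z := by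
  calc Tc a b k (Z + t • matrixUnit 1 1)
      = (2 * (Real.pi : ℂ) * Complex.I)⁻¹ * ∮ s in C(0, 1),
          (t * 1 + (s * Z 0 1 + Z 1 1)) ^ b * ((s * Z 0 0 + Z 1 0) ^ a * s ^ (k - 1)) := by
        simp only [Tc, matrixUnit]
        congr 2 with s
        simp
        ring
    _ = _ := by
        rw [circleIntegral_add_pow_mul (f := fun _ => 1) (g := fun s => s * Z 0 1 + Z 1 1)
          (h := fun s => (s * Z 0 0 + Z 1 0) ^ a * s ^ (k - 1)) zero_le_one (by fun_prop)
          (by fun_prop) (by fun_prop), mul_sum]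
        refine sum_congr rfl fun m _ => ?_
        rw [Tc, mul_left_comm]
        congr 2
        refine circleIntegral.integral_congr zero_le_one fun s _ => ?_
        ring

end Tc

theorem deriv_matrix_coefficients_general (a b : ℕ) (k : ℤ) :
    ∀ Z : Fin 2 → Fin 2 → ℂ,
      mpd 0 0 (Tc a b k) Z = (a : ℂ) * Tc (a - 1) b (k + 1) Z ∧
      mpd 1 0 (Tc a b k) Z = (a : ℂ) * Tc (a - 1) b k Z ∧
      mpd 0 1 (Tc a b k) Z = (b : ℂ) * Tc a (b - 1) (k + 1) Z ∧
      mpd 1 1 (Tc a b k) Z = (b : ℂ) * Tc a (b - 1) k Z := by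
  intro Z
  have hTc := differentiable_Tc a b k Z
  refine ⟨?_, ?_, ?_, ?_⟩
  · simpa only [mpd, Nat.cast_one] using
      fderiv_apply_eq_of_eq_sum_choose_mul_pow hTc (Tc_add_smul_matrixUnit_zero_zero a b k Z)
  · exact fderiv_apply_eq_of_eq_sum_choose_mul_pow hTc (Tc_add_smul_matrixUnit_one_zero a b k Z)
  · simpa only [mpd, Nat.cast_one] using
      fderiv_apply_eq_of_eq_sum_choose_mul_pow hTc (Tc_add_smul_matrixUnit_zero_one a b k Z)
  · exact fderiv_apply_eq_of_eq_sum_choose_mul_pow hTc (Tc_add_smul_matrixUnit_one_one a b k Z)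

/-- the derivative identity for SU(2) matrix coefficients.  With
`t^l_{n,m} = T (l−m) (l+m) (n−l)` (so `a = l−m`, `b = l+m`, `k = n−l` with
`−l ≤ m,n ≤ l`, i.e. `−(a+b) ≤ k ≤ 0`):
`∂₁₁ t^l_{n,m} = (l−m) t^{l−½}_{n+½,m+½}`, `∂₂₁ t^l_{n,m} = (l−m) t^{l−½}_{n−½,m+½}`,
`∂₁₂ t^l_{n,m} = (l+m) t^{l−½}_{n+½,m−½}`, `∂₂₂ t^l_{n,m} = (l+m) t^{l−½}_{n−½,m−½}`. -/
theorem deriv_matrix_coefficients (a b : ℕ) (k : ℤ)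
    (hk1 : -(a + b : ℤ) ≤ k) (hk2 : k ≤ 0) :
    ∀ Z : Fin 2 → Fin 2 → ℂ,
      mpd 0 0 (Tc a b k) Z = (a : ℂ) * Tc (a - 1) b (k + 1) Z ∧
      mpd 1 0 (Tc a b k) Z = (a : ℂ) * Tc (a - 1) b k Z ∧
      mpd 0 1 (Tc a b k) Z = (b : ℂ) * Tc a (b - 1) (k + 1) Z ∧
      mpd 1 1 (Tc a b k) Z = (b : ℂ) * Tc a (b - 1) k Z :=
  deriv_matrix_coefficients_general a b k
end
end

section
/- The SU(2) matrix coefficients satisfy the multiplication identity (2l+1)·Z·t^l_{n,m}(Z) = M₊(Z) + N(Z)·M₋(Z), where M₊(Z) is the 2×2 matrix with entries (l−n+1)t^{l+½}_{n−½,m∓½}(Z) in the first row and (l+n+1)t^{l+½}_{n+½,m∓½}(Z) in the second row, and M₋(Z) is the matrix with entries ((l+m)t^{l−½}_{n−½,m−½}(Z), −(l−m)t^{l−½}_{n−½,m+½}(Z); −(l+m)t^{l−½}_{n+½,m−½}(Z), (l−m)t^{l−½}_{n+½,m+½}(Z)). -/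
/-!
With `P = s z₁₁ + z₂₁` and `Q = s z₁₂ + z₂₂`, every `t^l_{n,m}` is a circle integral of
`P^a Q^b s^(k-1)`. Three relations between these integrals give all four entries: the integral
of an exact derivative `d/ds (P^a Q^b s^(k-1))` vanishes; `z₁₂ P − z₁₁ Q = −det Z` is constant
in `s`; and multiplying by `P` or `Q` splits into multiplying by `s` (raising `k`) and by a
constant.
-/

noncomputable section

/-- `N(Z) = det Z` for a 2×2 matrix. -/
def detc (Z : Fin 2 → Fin 2 → ℂ) : ℂ := Z 0 0 * Z 1 1 - Z 0 1 * Z 1 0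

open Complex Metric Set

def tcIntegrand (a b : ℕ) (k : ℤ) (Z : Fin 2 → Fin 2 → ℂ) (s : ℂ) : ℂ :=
  (s * Z 0 0 + Z 1 0) ^ a * (s * Z 0 1 + Z 1 1) ^ b * s ^ (k - 1)

lemma Tc_eq_circleIntegral (a b : ℕ) (k : ℤ) (Z : Fin 2 → Fin 2 → ℂ) :
    Tc a b k Z = (2 * (Real.pi : ℂ) * I)⁻¹ * ∮ s in C(0, 1), tcIntegrand a b k Z s :=
  rfl

@[fun_prop]
lemma circleIntegrable_tcIntegrand (a b : ℕ) (k : ℤ) (Z : Fin 2 → Fin 2 → ℂ) :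
    CircleIntegrable (tcIntegrand a b k Z) 0 1 := by
  refine ContinuousOn.circleIntegrable zero_le_one fun s hs => ?_
  have hs0 : s ≠ 0 := ne_zero_of_mem_unit_sphere ⟨s, hs⟩
  have hpoly : Continuous fun s : ℂ => (s * Z 0 0 + Z 1 0) ^ a * (s * Z 0 1 + Z 1 1) ^ b := by
    fun_prop
  exact (hpoly.continuousAt.mul (continuousAt_zpow₀ s (k - 1) (Or.inl hs0))).continuousWithinAt

lemma Tc_eq_add_of_eqOn {Z : Fin 2 → Fin 2 → ℂ} {a b a₁ b₁ a₂ b₂ : ℕ} {k k₁ k₂ : ℤ}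
    {c₁ c₂ : ℂ} (h : EqOn (tcIntegrand a b k Z)
      (fun s => c₁ * tcIntegrand a₁ b₁ k₁ Z s + c₂ * tcIntegrand a₂ b₂ k₂ Z s) (sphere 0 1)) :
    Tc a b k Z = c₁ * Tc a₁ b₁ k₁ Z + c₂ * Tc a₂ b₂ k₂ Z := by
  rw [Tc_eq_circleIntegral, circleIntegral.integral_congr zero_le_one h,
    circleIntegral.integral_add (by fun_prop) (by fun_prop)]
  simp only [Tc_eq_circleIntegral, circleIntegral.integral_const_mul]
  ring

section

variable (a b : ℕ) (k : ℤ) (Z : Fin 2 → Fin 2 → ℂ)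

lemma Tc_succ_left :
    Tc (a + 1) b k Z = Z 0 0 * Tc a b (k + 1) Z + Z 1 0 * Tc a b k Z :=
  Tc_eq_add_of_eqOn fun s hs => by
    have hs0 : s ≠ 0 := ne_zero_of_mem_unit_sphere ⟨s, hs⟩
    simp only [tcIntegrand, add_sub_right_comm k 1 1, zpow_add_one₀ hs0, pow_succ]
    ring

lemma Tc_succ_right :
    Tc a (b + 1) k Z = Z 0 1 * Tc a b (k + 1) Z + Z 1 1 * Tc a b k Z :=
  Tc_eq_add_of_eqOn fun s hs => by
    have hs0 : s ≠ 0 := ne_zero_of_mem_unit_sphere ⟨s, hs⟩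
    simp only [tcIntegrand, add_sub_right_comm k 1 1, zpow_add_one₀ hs0, pow_succ]
    ring

/-- `∮ d/ds (tcIntegrand a b k Z) = 0`, expanded; the truncated `a - 1`, `b - 1` are harmless
because their coefficients vanish. -/
lemma Tc_integration_by_parts :
    (a : ℂ) * Z 0 0 * Tc (a - 1) b k Z + b * Z 0 1 * Tc a (b - 1) k Z
      + (k - 1) * Tc a b (k - 1) Z = 0 := by
  have hderiv : ∀ s ∈ sphere (0 : ℂ) 1, HasDerivWithinAt (tcIntegrand a b k Z)
      (a * Z 0 0 * tcIntegrand (a - 1) b k Z s + b * Z 0 1 * tcIntegrand a (b - 1) k Z s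
        + (k - 1) * tcIntegrand a b (k - 1) Z s) (sphere 0 1) s := fun s hs => by
    have hP := ((hasDerivAt_id s).mul_const (Z 0 0)).add_const (Z 1 0)
    have hQ := ((hasDerivAt_id s).mul_const (Z 0 1)).add_const (Z 1 1)
    have hs0 : s ≠ 0 := ne_zero_of_mem_unit_sphere ⟨s, hs⟩
    refine (((hP.fun_pow a).fun_mul (hQ.fun_pow b)).fun_mul
      (hasDerivAt_zpow (k - 1) s (Or.inl hs0))).hasDerivWithinAt.congr_deriv ?_
    simp only [tcIntegrand, id, one_mul, Int.cast_sub, Int.cast_one]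
    ring
  have hzero := circleIntegral.integral_eq_zero_of_hasDerivWithinAt zero_le_one hderiv
  rw [circleIntegral.integral_add (by fun_prop) (by fun_prop),
    circleIntegral.integral_add (by fun_prop) (by fun_prop)] at hzero
  simp only [Tc_eq_circleIntegral, circleIntegral.integral_const_mul] at hzero ⊢
  linear_combination (2 * (Real.pi : ℂ) * I)⁻¹ * hzero

lemma Tc_succ_left_pred_right :
    (b : ℂ) * (Z 0 1 * Tc (a + 1) (b - 1) k Z)
      = b * (Z 0 0 * Tc a b k Z - detc Z * Tc a (b - 1) k Z) := by
  rcases b with _ | b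
  · simp
  · simp only [Nat.add_sub_cancel, Tc_succ_left, Tc_succ_right, detc]
    ring

lemma Tc_pred_left_succ_right :
    (a : ℂ) * (Z 0 0 * Tc (a - 1) (b + 1) k Z)
      = a * (Z 0 1 * Tc a b k Z + detc Z * Tc (a - 1) b k Z) := by
  rcases a with _ | a
  · simp
  · simp only [Nat.add_sub_cancel, Tc_succ_left, Tc_succ_right, detc]
    ring

end

/-- Written entrywise in the parametrization `a = l−m`, `b = l+m`, `k = n−l`, so that
`2l+1 = a+b+1`, `l−n+1 = 1−k`, `l+n+1 = a+b+k+1`, `l−m = a`, `l+m = b`. -/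
theorem mul_matrix_coefficients_general (a b : ℕ) (k : ℤ) :
    ∀ Z : Fin 2 → Fin 2 → ℂ,
      ((a : ℂ) + b + 1) * Z 0 0 * Tc a b k Z
        = (1 - (k : ℂ)) * Tc (a + 1) b (k - 1) Z + detc Z * ((b : ℂ) * Tc a (b - 1) k Z) ∧
      ((a : ℂ) + b + 1) * Z 0 1 * Tc a b k Z
        = (1 - (k : ℂ)) * Tc a (b + 1) (k - 1) Z + detc Z * (-(a : ℂ) * Tc (a - 1) b k Z) ∧
      ((a : ℂ) + b + 1) * Z 1 0 * Tc a b k Z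
        = ((a : ℂ) + b + k + 1) * Tc (a + 1) b k Z + detc Z * (-(b : ℂ) * Tc a (b - 1) (k + 1) Z) ∧
      ((a : ℂ) + b + 1) * Z 1 1 * Tc a b k Z
        = ((a : ℂ) + b + k + 1) * Tc a (b + 1) k Z + detc Z * ((a : ℂ) * Tc (a - 1) b (k + 1) Z) := by
  intro Z
  have ibp_left := Tc_integration_by_parts (a + 1) b k Z
  have ibp_right := Tc_integration_by_parts a (b + 1) k Z
  have ibp_left' := Tc_integration_by_parts (a + 1) b (k + 1) Z
  have ibp_right' := Tc_integration_by_parts a (b + 1) (k + 1) Z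
  simp only [Nat.add_sub_cancel, add_sub_cancel_right] at ibp_left ibp_right ibp_left' ibp_right'
  push_cast at ibp_left ibp_right ibp_left' ibp_right'
  refine ⟨?_, ?_, ?_, ?_⟩
  · linear_combination ibp_left - Tc_succ_left_pred_right a b k Z
  · linear_combination ibp_right - Tc_pred_left_succ_right a b k Z
  · linear_combination -ibp_left' + Tc_succ_left_pred_right a b (k + 1) Z
      - ((a : ℂ) + b + 1) * Tc_succ_left a b k Z
  · linear_combination -ibp_right' + Tc_pred_left_succ_right a b (k + 1) Z
      - ((a : ℂ) + b + 1) * Tc_succ_right a b k Z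

/-- the multiplication identity
`(2l+1)·Z·t^l_{n,m}(Z) = M₊(Z) + N(Z)·M₋(Z)` for SU(2) matrix coefficients, written
entrywise in the parametrization `a = l−m`, `b = l+m`, `k = n−l` (`−(a+b) ≤ k ≤ 0`),
so that `2l+1 = a+b+1`, `l−n+1 = 1−k`, `l+n+1 = a+b+k+1`, `l−m = a`, `l+m = b`. -/
theorem mul_matrix_coefficients (a b : ℕ) (k : ℤ)
    (hk1 : -(a + b : ℤ) ≤ k) (hk2 : k ≤ 0) :
    ∀ Z : Fin 2 → Fin 2 → ℂ,
      ((a : ℂ) + b + 1) * Z 0 0 * Tc a b k Z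
        = (1 - (k : ℂ)) * Tc (a + 1) b (k - 1) Z + detc Z * ((b : ℂ) * Tc a (b - 1) k Z) ∧
      ((a : ℂ) + b + 1) * Z 0 1 * Tc a b k Z
        = (1 - (k : ℂ)) * Tc a (b + 1) (k - 1) Z + detc Z * (-(a : ℂ) * Tc (a - 1) b k Z) ∧
      ((a : ℂ) + b + 1) * Z 1 0 * Tc a b k Z
        = ((a : ℂ) + b + k + 1) * Tc (a + 1) b k Z + detc Z * (-(b : ℂ) * Tc a (b - 1) (k + 1) Z) ∧
      ((a : ℂ) + b + 1) * Z 1 1 * Tc a b k Z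
        = ((a : ℂ) + b + k + 1) * Tc a (b + 1) k Z + detc Z * ((a : ℂ) * Tc (a - 1) b (k + 1) Z) :=
  mul_matrix_coefficients_general a b k
end
end
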